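/- Let (d_r,d_g) be either (2,2) or (3,3), let d_l > d_r be an integer, and let φ be a GEC transfer function with integral Φ. Let x₁ ∈ (0,1) be such that x₂[x₁] ∈ [0,1], and let ε ∈ [0,1] satisfy φ(ψ[x₁]; ε) = φ[x₁] (so (x₁, x₂[x₁]) is a nontrivial fixed point of the MN density evolution at channel parameter ε). Then U(x₁, x₂[x₁]; ε) > 0. -/

import Mathlib

/-- The integral `Φ(x;ε) := ∫₀ˣ φ(t;ε) dt` of a GEC transfer function. -/
noncomputable def Phi (φ : ℝ → ℝ → ℝ) (x ε : ℝ) : ℝ := ∫ t in (0:ℝ)..x, φ t ε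

/-- A GEC transfer function: maps `[0,1]×[0,1]` to `[0,1]`, continuous and
nondecreasing in `x` for each `ε`, strictly increasing in `ε` for each `x`. -/
def IsGEC (φ : ℝ → ℝ → ℝ) : Prop :=
  (∀ x ∈ Set.Icc (0:ℝ) 1, ∀ ε ∈ Set.Icc (0:ℝ) 1, φ x ε ∈ Set.Icc (0:ℝ) 1) ∧
  (∀ ε ∈ Set.Icc (0:ℝ) 1, ContinuousOn (fun x => φ x ε) (Set.Icc (0:ℝ) 1) ∧
      MonotoneOn (fun x => φ x ε) (Set.Icc (0:ℝ) 1)) ∧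
  (∀ x ∈ Set.Icc (0:ℝ) 1, StrictMonoOn (fun ε => φ x ε) (Set.Icc (0:ℝ) 1))

/-- The MN potential function `U(x₁,x₂;ε)` of the `(d_l,d_r,d_g)` MN code. -/
noncomputable def U (dl dr dg : ℕ) (φ : ℝ → ℝ → ℝ) (x₁ x₂ ε : ℝ) : ℝ :=
  1 - Phi φ ((1 - (1-x₁)^dr * (1-x₂)^(dg-1))^dg) ε
    - ((dr : ℝ)/(dl : ℝ)) * (1 - (1-x₁)^(dr-1) * (1-x₂)^dg)^dl
    - (1-x₁)^dr * (1-x₂)^dg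
    - (dr : ℝ) * x₁ * (1-x₁)^(dr-1) * (1-x₂)^dg
    - (dg : ℝ) * x₂ * (1-x₁)^dr * (1-x₂)^(dg-1)

/-- The nontrivial fixed-point parametrization `x₂[x₁]`. -/
noncomputable def x2FP (dl dr dg : ℕ) (x₁ : ℝ) : ℝ :=
  1 - ((1 - x₁ ^ ((1:ℝ)/((dl:ℝ) - 1))) / (1-x₁)^(dr-1)) ^ ((1:ℝ)/(dg:ℝ))

/-- `ψ[x₁] := (1−(1−x₁)^{d_r}(1−x₂[x₁])^{d_g−1})^{d_g}`. -/
noncomputable def psiFP (dl dr dg : ℕ) (x₁ : ℝ) : ℝ :=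
  (1 - (1-x₁)^dr * (1 - x2FP dl dr dg x₁)^(dg-1))^dg

/-- The channel value `φ[x₁]` at the nontrivial fixed point. -/
noncomputable def phiFP (dl dr dg : ℕ) (x₁ : ℝ) : ℝ :=
  x2FP dl dr dg x₁ / (1 - (1-x₁)^dr * (1 - x2FP dl dr dg x₁)^(dg-1))^(dg-1)

/-!
Write `a = 1 - x₁`, `b = 1 - x₂[x₁]` and `s = x₁ ^ (1 / (d_l - 1))`; the fixed-point equation
becomes `a ^ (d_r - 1) * b ^ d_g = 1 - s`, so the `d_l`-term of `U` is `(d_r / d_l) * s ^ d_l`.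
Since `φ(·; ε)` is nondecreasing, `Φ(ψ) ≤ ψ φ(ψ) = (1 - a ^ d_r * b ^ (d_g - 1)) * x₂`, and what
remains of `U` is a polynomial in `a, b` carrying the factor `1 - a = s ^ (d_l - 1)`.
Dropping a square (resp. AM-GM `3 b² ≤ 2 b³ + 1`) bounds the cofactor below by `s * b`
(resp. `s * (2 - s) * b`), and Bernoulli's inequality `1 - s ^ (d_l - 1) ≤ (d_l - 1) * (1 - s)`
gives `b > 2 / d_l` (resp. `b * (2 - s) > 3 / d_l`), which beats `(d_r / d_l) * s ^ d_l`.
-/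

open Set

theorem integral_le_mul_of_monotoneOn {f : ℝ → ℝ} {a b : ℝ} (hab : a ≤ b)
    (hf : MonotoneOn f (Icc a b)) : ∫ t in a..b, f t ≤ (b - a) * f b := by
  have hint : IntervalIntegrable f MeasureTheory.volume a b :=
    (uIcc_of_le hab ▸ hf).intervalIntegrable
  calc ∫ t in a..b, f t ≤ ∫ _ in a..b, f b :=
        intervalIntegral.integral_mono_on hab hint intervalIntegrable_const
          fun t ht => hf ht (right_mem_Icc.2 hab) ht.2
    _ = (b - a) * f b := by rw [intervalIntegral.integral_const, smul_eq_mul]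

theorem IsGEC.Phi_le_mul {φ : ℝ → ℝ → ℝ} (hφ : IsGEC φ) {ψ ε : ℝ} (hψ : ψ ∈ Icc (0:ℝ) 1)
    (hε : ε ∈ Icc (0:ℝ) 1) : Phi φ ψ ε ≤ ψ * φ ψ ε := by
  simpa [Phi] using integral_le_mul_of_monotoneOn hψ.1
    ((hφ.2.1 ε hε).2.mono (Icc_subset_Icc_right hψ.2))

theorem exists_root_x2FP {dl : ℕ} (dr : ℕ) {dg : ℕ} (hdl : 2 ≤ dl) (hdg : dg ≠ 0) {x₁ : ℝ}
    (hx₁ : x₁ ∈ Ioo (0:ℝ) 1) :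
    ∃ s ∈ Ioo (0:ℝ) 1, s ^ (dl - 1) = x₁ ∧
      1 - (1 - x₁) ^ (dr - 1) * (1 - x2FP dl dr dg x₁) ^ dg = s := by
  obtain ⟨hx0, hx1⟩ := hx₁
  have hexp : (1:ℝ) / ((dl:ℝ) - 1) = ((dl - 1 : ℕ) : ℝ)⁻¹ := by
    rw [Nat.cast_sub (by omega), one_div, Nat.cast_one]
  set s := x₁ ^ ((1:ℝ) / ((dl:ℝ) - 1)) with hs
  have hs0 : 0 < s := Real.rpow_pos_of_pos hx0 _
  have hdl1 : (0:ℝ) < ((dl - 1 : ℕ) : ℝ) := by exact_mod_cast (by omega : 0 < dl - 1)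
  have hs1 : s < 1 := Real.rpow_lt_one hx0.le hx1 (by rw [hexp]; positivity)
  have ha : 0 < (1 - x₁) ^ (dr - 1) := pow_pos (by linarith) _
  refine ⟨s, ⟨hs0, hs1⟩, ?_, ?_⟩
  · rw [hs, hexp, Real.rpow_inv_natCast_pow hx0.le (by omega)]
  · rw [x2FP, ← hs, sub_sub_cancel, one_div,
      Real.rpow_inv_natCast_pow (div_nonneg (by linarith) ha.le) hdg, mul_div_cancel₀ _ ha.ne',
      sub_sub_cancel]

theorem Phi_psiFP_le {dl dr dg : ℕ} (hdg : dg ≠ 0) {φ : ℝ → ℝ → ℝ} (hφ : IsGEC φ) {x₁ : ℝ}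
    (hx₁ : x₁ ∈ Icc (0:ℝ) 1) (hx₂ : x2FP dl dr dg x₁ ∈ Icc (0:ℝ) 1) {ε : ℝ}
    (hε : ε ∈ Icc (0:ℝ) 1) (hfix : φ (psiFP dl dr dg x₁) ε = phiFP dl dr dg x₁) :
    Phi φ (psiFP dl dr dg x₁) ε
      ≤ (1 - (1 - x₁) ^ dr * (1 - x2FP dl dr dg x₁) ^ (dg - 1)) * x2FP dl dr dg x₁ := by
  obtain ⟨ha0, ha1⟩ : 0 ≤ 1 - x₁ ∧ 1 - x₁ ≤ 1 := ⟨by linarith [hx₁.2], by linarith [hx₁.1]⟩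
  obtain ⟨hb0, hb1⟩ : 0 ≤ 1 - x2FP dl dr dg x₁ ∧ 1 - x2FP dl dr dg x₁ ≤ 1 :=
    ⟨by linarith [hx₂.2], by linarith [hx₂.1]⟩
  set x₂ := x2FP dl dr dg x₁
  set z := 1 - (1 - x₁) ^ dr * (1 - x₂) ^ (dg - 1)
  have hprod : (1 - x₁) ^ dr * (1 - x₂) ^ (dg - 1) ∈ Icc (0:ℝ) 1 :=
    ⟨by positivity, mul_le_one₀ (pow_le_one₀ ha0 ha1) (by positivity) (pow_le_one₀ hb0 hb1)⟩
  have hz : z ∈ Icc (0:ℝ) 1 := ⟨by linarith [hprod.2], by linarith [hprod.1]⟩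
  have hψ : psiFP dl dr dg x₁ = z ^ dg := rfl
  have hψmem : z ^ dg ∈ Icc (0:ℝ) 1 := ⟨pow_nonneg hz.1 _, pow_le_one₀ hz.1 hz.2⟩
  calc Phi φ (psiFP dl dr dg x₁) ε ≤ z ^ dg * φ (psiFP dl dr dg x₁) ε := by
        rw [hψ]; exact hφ.Phi_le_mul hψmem hε
    _ = z ^ dg * (x₂ / z ^ (dg - 1)) := by rw [hfix]; rfl
    _ = z * x₂ := by
        obtain ⟨k, rfl⟩ := Nat.exists_eq_succ_of_ne_zero hdg
        rcases eq_or_ne z 0 with h | h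
        · simp [h]
        · rw [Nat.succ_sub_one, pow_succ']; field_simp

theorem le_pred_mul_one_sub_of_one_sub_eq_pow {n : ℕ} (hn : 1 ≤ n) {a s : ℝ} (hs : 0 ≤ s)
    (ha : 1 - a = s ^ (n - 1)) : a ≤ (n - 1) * (1 - s) := by
  have := one_add_mul_sub_le_pow (by linarith : (-1:ℝ) ≤ s) (n - 1)
  rw [Nat.cast_sub hn, Nat.cast_one] at this
  linarith

theorem potential_bound_two {n : ℕ} (hn : 3 ≤ n) {a b s : ℝ} (hs : s ∈ Ioo (0:ℝ) 1)
    (ha : 1 - a = s ^ (n - 1)) (hb : 0 ≤ b) (hab : a * b ^ 2 = 1 - s) :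
    2 / n * s ^ n < 1 - (1 - a ^ 2 * b) * (1 - b) - a ^ 2 * b ^ 2
      - 2 * (1 - a) * a * b ^ 2 - 2 * (1 - b) * (a ^ 2 * b) := by
  obtain ⟨hs0, hs1⟩ := hs
  have hn' : (3:ℝ) ≤ n := by exact_mod_cast hn
  have ha0 : 0 < a := by linarith [pow_lt_one₀ hs0.le hs1 (by omega : n - 1 ≠ 0)]
  have hbern := le_pred_mul_one_sub_of_one_sub_eq_pow (by omega) hs0.le ha
  have hnb : 2 < n * b := by
    have hb2 : 1 ≤ (n - 1) * b ^ 2 := by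
      by_contra! h
      nlinarith [mul_le_mul_of_nonneg_right hbern (sq_nonneg b)]
    refine lt_of_pow_lt_pow_left₀ 2 (by positivity) ?_
    nlinarith [sq_nonneg ((n:ℝ) - 2)]
  have hmid : s * b ≤ (1 + a) * b - 2 * a * b ^ 2 := by
    linear_combination mul_nonneg (mul_nonneg ha0.le hb) (sq_nonneg (1 - b)) + b * hab
  calc 2 / n * s ^ n < s ^ n * b := by
        rw [mul_comm]
        exact mul_lt_mul_of_pos_left ((div_lt_iff₀ (by positivity)).2 (by linarith)) (by positivity)
    _ = s ^ (n - 1) * (s * b) := by rw [← mul_assoc, ← pow_succ, Nat.sub_add_cancel (by omega)]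
    _ ≤ (1 - a) * ((1 + a) * b - 2 * a * b ^ 2) := by rw [ha]; gcongr
    _ = _ := by ring

theorem potential_bound_three {n : ℕ} (hn : 4 ≤ n) {a b s : ℝ} (hs : s ∈ Ioo (0:ℝ) 1)
    (ha : 1 - a = s ^ (n - 1)) (hb : 0 ≤ b) (hab : a ^ 2 * b ^ 3 = 1 - s) :
    3 / n * s ^ n < 1 - (1 - a ^ 3 * b ^ 2) * (1 - b) - a ^ 3 * b ^ 3
      - 3 * (1 - a) * a ^ 2 * b ^ 3 - 3 * (1 - b) * (a ^ 3 * b ^ 2) := by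
  obtain ⟨hs0, hs1⟩ := hs
  have hn' : (4:ℝ) ≤ n := by exact_mod_cast hn
  have ha0 : 0 < a := by linarith [pow_lt_one₀ hs0.le hs1 (by omega : n - 1 ≠ 0)]
  have hbern := le_pred_mul_one_sub_of_one_sub_eq_pow (by omega) hs0.le ha
  have hnb : 3 < n * b * (2 - s) := by
    set w := 1 - s
    have hw : 0 < w := by linarith
    have hb3 : 1 ≤ (n - 1) ^ 2 * w * b ^ 3 := by
      by_contra! h
      have : a ^ 2 ≤ ((n - 1) * w) ^ 2 := pow_le_pow_left₀ ha0.le hbern 2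
      nlinarith [mul_le_mul_of_nonneg_right this (pow_nonneg hb 3)]
    -- `4 (1 + w)³ - 27 w = (w + 4)(2w - 1)²`
    have hw3 : 27 * w ≤ 4 * (1 + w) ^ 3 := by
      nlinarith [mul_nonneg (by linarith : (0:ℝ) ≤ w + 4) (sq_nonneg (2 * w - 1))]
    have hn3 : 4 * ((n:ℝ) - 1) ^ 2 < n ^ 3 := by nlinarith [sq_nonneg ((n:ℝ) - 4)]
    have h2s : 2 - s = 1 + w := by ring
    refine lt_of_pow_lt_pow_left₀ 3 (mul_nonneg (by positivity) (by linarith)) ?_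
    have hc : 0 < ((n:ℝ) - 1) ^ 2 * w := mul_pos (by nlinarith) hw
    have : 3 ^ 3 * (((n:ℝ) - 1) ^ 2 * w) < (n * b * (2 - s)) ^ 3 * ((n - 1) ^ 2 * w) := by
      calc 3 ^ 3 * (((n:ℝ) - 1) ^ 2 * w) < (n:ℝ) ^ 3 * (27 / 4 * w) := by
            nlinarith [mul_lt_mul_of_pos_right hn3 hw]
        _ ≤ n ^ 3 * (1 + w) ^ 3 := by gcongr; linarith
        _ ≤ n ^ 3 * (1 + w) ^ 3 * ((n - 1) ^ 2 * w * b ^ 3) :=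
            le_mul_of_one_le_right (by positivity) hb3
        _ = (n * b * (2 - s)) ^ 3 * ((n - 1) ^ 2 * w) := by rw [h2s]; ring
    exact lt_of_mul_lt_mul_right this hc.le
  have hmid : s * (2 - s) ≤ 1 + a + a ^ 2 - 3 * a ^ 2 * b ^ 2 := by
    have hamgm : 3 * b ^ 2 ≤ 2 * b ^ 3 + 1 := by
      nlinarith [mul_nonneg (sq_nonneg (1 - b)) (by linarith : (0:ℝ) ≤ 1 + 2 * b)]
    have hs2 : s ^ (n - 1) ≤ s ^ 2 := pow_le_pow_of_le_one hs0.le hs1.le (by omega)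
    nlinarith [mul_le_mul_of_nonneg_left hamgm (sq_nonneg a)]
  calc 3 / n * s ^ n < s ^ n * (b * (2 - s)) := by
        rw [mul_comm]
        exact mul_lt_mul_of_pos_left ((div_lt_iff₀ (by positivity)).2 (by linarith)) (by positivity)
    _ = s ^ (n - 1) * b * (s * (2 - s)) := by
        rw [← Nat.sub_add_cancel (by omega : 1 ≤ n), pow_succ, Nat.add_sub_cancel]; ring
    _ ≤ (1 - a) * b * (1 + a + a ^ 2 - 3 * a ^ 2 * b ^ 2) := by rw [ha]; gcongr
    _ ≤ (1 - a) * b * (1 + a + a ^ 2 - 3 * a ^ 2 * b ^ 2) + a ^ 3 * b * (1 - b) ^ 2 :=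
        le_add_of_nonneg_right (by positivity)
    _ = _ := by ring

theorem U_pos_two {dl : ℕ} (hdl : 2 < dl) {φ : ℝ → ℝ → ℝ} (hφ : IsGEC φ) {x₁ : ℝ}
    (hx₁ : x₁ ∈ Ioo (0:ℝ) 1) (hx₂ : x2FP dl 2 2 x₁ ∈ Icc (0:ℝ) 1) {ε : ℝ}
    (hε : ε ∈ Icc (0:ℝ) 1) (hfix : φ (psiFP dl 2 2 x₁) ε = phiFP dl 2 2 x₁) :
    0 < U dl 2 2 φ x₁ (x2FP dl 2 2 x₁) ε := by
  obtain ⟨s, hs, hsx, hrel⟩ := exists_root_x2FP (dl := dl) 2 (by omega) two_ne_zero hx₁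
  have hPhi := Phi_psiFP_le two_ne_zero hφ (Ioo_subset_Icc_self hx₁) hx₂ hε hfix
  have hbound := potential_bound_two hdl hs (a := 1 - x₁) (b := 1 - x2FP dl 2 2 x₁)
    (by rw [hsx]; ring) (by linarith [hx₂.2]) (by rw [← hrel]; norm_num)
  simp only [psiFP, Nat.add_one_sub_one, pow_one] at hPhi
  rw [U, hrel]
  simp only [Nat.cast_ofNat, Nat.add_one_sub_one, pow_one]
  linear_combination hbound + hPhi

theorem U_pos_three {dl : ℕ} (hdl : 3 < dl) {φ : ℝ → ℝ → ℝ} (hφ : IsGEC φ) {x₁ : ℝ}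
    (hx₁ : x₁ ∈ Ioo (0:ℝ) 1) (hx₂ : x2FP dl 3 3 x₁ ∈ Icc (0:ℝ) 1) {ε : ℝ}
    (hε : ε ∈ Icc (0:ℝ) 1) (hfix : φ (psiFP dl 3 3 x₁) ε = phiFP dl 3 3 x₁) :
    0 < U dl 3 3 φ x₁ (x2FP dl 3 3 x₁) ε := by
  obtain ⟨s, hs, hsx, hrel⟩ := exists_root_x2FP (dl := dl) 3 (by omega) three_ne_zero hx₁
  have hPhi := Phi_psiFP_le three_ne_zero hφ (Ioo_subset_Icc_self hx₁) hx₂ hε hfix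
  have hbound := potential_bound_three hdl hs (a := 1 - x₁) (b := 1 - x2FP dl 3 3 x₁)
    (by rw [hsx]; ring) (by linarith [hx₂.2]) (by rw [← hrel]; norm_num)
  simp only [psiFP] at hPhi
  rw [U, hrel]
  simp only [Nat.cast_ofNat]
  linear_combination hbound + hPhi

/-- For `(d_r,d_g) ∈ {(2,2),(3,3)}` and `d_l > d_r`, the MN potential of any
GEC is strictly positive at every nontrivial fixed point. -/
theorem stmt7 (dl dr dg : ℕ)
    (hdeg : (dr = 2 ∧ dg = 2) ∨ (dr = 3 ∧ dg = 3)) (hrl : dr < dl)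
    (φ : ℝ → ℝ → ℝ) (hφ : IsGEC φ)
    (x₁ : ℝ) (hx₁ : x₁ ∈ Set.Ioo (0:ℝ) 1)
    (hx₂ : x2FP dl dr dg x₁ ∈ Set.Icc (0:ℝ) 1)
    (ε : ℝ) (hε : ε ∈ Set.Icc (0:ℝ) 1)
    (hfix : φ (psiFP dl dr dg x₁) ε = phiFP dl dr dg x₁) :
    0 < U dl dr dg φ x₁ (x2FP dl dr dg x₁) ε := by
  rcases hdeg with ⟨rfl, rfl⟩ | ⟨rfl, rfl⟩
  · exact U_pos_two hrl hφ hx₁ hx₂ hε hfix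
  · exact U_pos_three hrl hφ hx₁ hx₂ hε hfix
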